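/- Let 𝐖 = (o → o) → (o → o) → o → o be the Church type of binary strings and 𝐁 = o → o → o the Church type of booleans. Every language 𝓛 ⊆ {0,1}* decided by a closed simply-typed λ-term M of type 𝐖 → 𝐁 (in the sense that for every binary string s with Church encoding s̄ : 𝐖, s ∈ 𝓛 iff M s̄ =βη 𝐭𝐫𝐮𝐞) belongs to 𝐋𝐢𝐧𝐓𝐈𝐌𝐄, deterministic linear time. -/

import Mathlib

/-! Simple types over a base type `o`, and the relational semantics
(non-idempotent intersection types): `o` is interpreted by a countably
infinite set of atoms (here `ℕ`), and `σ → τ` by finite multisets over the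
web of `σ` paired with the web of `τ`. -/

/-- Simple types over the base type `o`. -/
inductive Ty : Type
  | o : Ty
  | arrow : Ty → Ty → Ty

/-- The relational web of a simple type. -/
def Web : Ty → Type
  | .o => ℕ
  | .arrow σ τ => Multiset (Web σ) × Web τ

/-- Typed de Bruijn variables. -/
inductive Var : List Ty → Ty → Type
  | zero {Γ σ} : Var (σ :: Γ) σ
  | succ {Γ σ τ} : Var Γ σ → Var (τ :: Γ) σ

/-- Intrinsically simply-typed λ-terms. -/
inductive Tm : List Ty → Ty → Type
  | var {Γ σ} : Var Γ σ → Tm Γ σ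
  | lam {Γ σ τ} : Tm (σ :: Γ) τ → Tm Γ (Ty.arrow σ τ)
  | app {Γ σ τ} : Tm Γ (Ty.arrow σ τ) → Tm Γ σ → Tm Γ τ

/-- Renamings between contexts. -/
def Ren (Γ Δ : List Ty) : Type := ∀ σ, Var Γ σ → Var Δ σ

/-- Lifting a renaming under a binder. -/
def Ren.lift {Γ Δ : List Ty} (ρ : Ren Γ Δ) (τ : Ty) : Ren (τ :: Γ) (τ :: Δ) :=
  fun _ v =>
    match v with
    | .zero => .zero
    | .succ w => .succ (ρ _ w)

/-- Applying a renaming to a term. -/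
def rename : {Γ Δ : List Ty} → Ren Γ Δ → {σ : Ty} → Tm Γ σ → Tm Δ σ
  | _, _, ρ, _, .var v => .var (ρ _ v)
  | _, _, ρ, _, .lam M => .lam (rename (Ren.lift ρ _) M)
  | _, _, ρ, _, .app M N => .app (rename ρ M) (rename ρ N)

/-- Substitutions between contexts. -/
def Subst (Γ Δ : List Ty) : Type := ∀ σ, Var Γ σ → Tm Δ σ

/-- Lifting a substitution under a binder. -/
def Subst.lift {Γ Δ : List Ty} (s : Subst Γ Δ) (τ : Ty) : Subst (τ :: Γ) (τ :: Δ) :=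
  fun _ v =>
    match v with
    | .zero => .var .zero
    | .succ w => rename (fun _ u => Var.succ u) (s _ w)

/-- Applying a substitution to a term. -/
def subst : {Γ Δ : List Ty} → Subst Γ Δ → {σ : Ty} → Tm Γ σ → Tm Δ σ
  | _, _, s, _, .var v => s _ v
  | _, _, s, _, .lam M => .lam (subst (Subst.lift s _) M)
  | _, _, s, _, .app M N => .app (subst s M) (subst s N)

/-- The substitution replacing the last variable by `N`. -/
def Subst.cons {Γ : List Ty} {σ : Ty} (N : Tm Γ σ) : Subst (σ :: Γ) Γ :=
  fun _ v =>
    match v with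
    | .zero => N
    | .succ w => .var w

/-- Substitution of the last variable. -/
def subst1 {Γ : List Ty} {σ τ : Ty} (M : Tm (σ :: Γ) τ) (N : Tm Γ σ) : Tm Γ τ :=
  subst (Subst.cons N) M

/-- βη-convertibility of simply-typed λ-terms. -/
inductive BetaEta : {Γ : List Ty} → {σ : Ty} → Tm Γ σ → Tm Γ σ → Prop
  | refl {Γ σ} (M : Tm Γ σ) : BetaEta M M
  | symm {Γ σ} {M N : Tm Γ σ} : BetaEta M N → BetaEta N M
  | trans {Γ σ} {M N P : Tm Γ σ} : BetaEta M N → BetaEta N P → BetaEta M P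
  | app_congr {Γ σ τ} {M M' : Tm Γ (Ty.arrow σ τ)} {N N' : Tm Γ σ} :
      BetaEta M M' → BetaEta N N' → BetaEta (M.app N) (M'.app N')
  | lam_congr {Γ σ τ} {M M' : Tm (σ :: Γ) τ} : BetaEta M M' → BetaEta M.lam M'.lam
  | beta {Γ σ τ} (M : Tm (σ :: Γ) τ) (N : Tm Γ σ) : BetaEta (Tm.app M.lam N) (subst1 M N)
  | eta {Γ σ τ} (M : Tm Γ (Ty.arrow σ τ)) :
      BetaEta M (Tm.lam (Tm.app (rename (fun _ v => Var.succ v) M) (Tm.var Var.zero)))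

/-- Relational environments: a finite multiset over the web of `σ` for each
variable of type `σ` in the context. -/
def REnv (Γ : List Ty) : Type := ∀ σ, Var Γ σ → Multiset (Web σ)

/-- Extending a relational environment. -/
def REnv.cons {Γ : List Ty} {σ : Ty} (X : Multiset (Web σ)) (ρ : REnv Γ) :
    REnv (σ :: Γ) :=
  fun _ v =>
    match v with
    | .zero => X
    | .succ w => ρ _ w

/-- The empty relational environment. -/
def REnv.nil : REnv [] := fun _ v => nomatch v

/-- The relational semantics of a typing sequent: `Sem M ρ α` means that the
tuple `(ρ, α)` belongs to the relational interpretation `⟦x̄:σ̄ ⊢ M : σ⟧`. -/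
def Sem : {Γ : List Ty} → {σ : Ty} → Tm Γ σ → REnv Γ → Web σ → Prop
  | _, _, .var v, ρ, α => α ∈ ρ _ v
  | _, _, .lam M, ρ, α => Sem M (REnv.cons α.1 ρ) α.2
  | _, _, @Tm.app _ σ _ M N, ρ, α =>
      ∃ Y : Multiset (Web σ), Sem M ρ (Y, α) ∧ ∀ β ∈ Y, Sem N ρ β

/-- `RelType M α σ` (written `⊳ M : α : σ` in the paper): the point `α`
belongs to the relational interpretation of the closed term `M : σ`. -/
def RelType {σ : Ty} (M : Tm [] σ) (α : Web σ) : Prop := Sem M REnv.nil α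

/-- The Church type of booleans `𝐁 = o → o → o`. -/
def TyB : Ty := Ty.arrow .o (Ty.arrow .o .o)

/-- The Church boolean `𝐭𝐫𝐮𝐞 = λx y. x`. -/
def churchTrue : Tm [] TyB := .lam (.lam (.var (.succ .zero)))

/-- The Church boolean `𝐟𝐚𝐥𝐬𝐞 = λx y. y`. -/
def churchFalse : Tm [] TyB := .lam (.lam (.var .zero))

/-- The relational point `[∗] → ∅ → ∗` of the type `𝐁`. -/
def boolPoint (ast : Web Ty.o) : Web TyB := ({ast}, (0, ast))

/-- The Church type of binary strings `𝐖 = (o → o) → (o → o) → o → o`. -/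
def TyW : Ty := Ty.arrow (Ty.arrow .o .o) (Ty.arrow (Ty.arrow .o .o) (Ty.arrow .o .o))

/-- The body of the Church encoding of a binary string: for each bit, apply
the first argument (for `0` = `false`) or the second (for `1` = `true`), in
order, to the last argument. -/
def churchBits : List Bool → Tm [Ty.o, Ty.arrow .o .o, Ty.arrow .o .o] Ty.o
  | [] => .var .zero
  | b :: s =>
      .app (if b then .var (.succ .zero) else .var (.succ (.succ .zero))) (churchBits s)

/-- The Church encoding `s̄ : 𝐖` of a binary string `s`. -/
def churchStr (s : List Bool) : Tm [] TyW := .lam (.lam (.lam (churchBits s)))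

/-- The evident finite encoding of binary strings over the alphabet `Bool`. -/
def finEncodingListBool : Computability.Encoding (List Bool) Bool where
  encode := id
  decode := fun l => some l
  decode_encode := fun _ => rfl

/-! Interpret the simply-typed λ-calculus in the full set-theoretic model over `Bool`. The model
is sound for βη, and a Tait-style logical relation shows that every closed term of type `𝐁` is
βη-equal to `𝐭𝐫𝐮𝐞` or `𝐟𝐚𝐥𝐬𝐞`, which the model tells apart; hence `M s̄ =βη 𝐭𝐫𝐮𝐞` iff
`⟦M⟧ ⟦s̄⟧ true false = true`. The denotation `⟦s̄⟧` can be computed letter by letter inside the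
finite set `⟦𝐖⟧`, so the language of `M` is accepted by a DFA, and a one-stack machine runs a
DFA in one step per letter. -/

theorem rename_rename : ∀ {Γ Δ Θ : List Ty} {σ : Ty} (M : Tm Γ σ) (ρ₁ : Ren Γ Δ) (ρ₂ : Ren Δ Θ),
    rename ρ₂ (rename ρ₁ M) = rename (fun τ v => ρ₂ τ (ρ₁ τ v)) M
  | _, _, _, _, .var _, _, _ => rfl
  | _, _, _, _, .lam M, ρ₁, ρ₂ => by
    simp only [rename, rename_rename M]
    congr 2
    funext τ v
    cases v <;> rfl
  | _, _, _, _, .app M N, ρ₁, ρ₂ => by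
    simp only [rename, rename_rename M, rename_rename N]

theorem subst_rename : ∀ {Γ Δ Θ : List Ty} {σ : Ty} (M : Tm Γ σ) (ρ : Ren Γ Δ) (s : Subst Δ Θ),
    subst s (rename ρ M) = subst (fun τ v => s τ (ρ τ v)) M
  | _, _, _, _, .var _, _, _ => rfl
  | _, _, _, _, .lam M, ρ, s => by
    simp only [rename, subst, subst_rename M]
    congr 2
    funext τ v
    cases v <;> rfl
  | _, _, _, _, .app M N, ρ, s => by
    simp only [rename, subst, subst_rename M, subst_rename N]

theorem rename_subst : ∀ {Γ Δ Θ : List Ty} {σ : Ty} (M : Tm Γ σ) (s : Subst Γ Δ) (ρ : Ren Δ Θ),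
    rename ρ (subst s M) = subst (fun τ v => rename ρ (s τ v)) M
  | _, _, _, _, .var _, _, _ => rfl
  | _, _, _, _, .lam M, s, ρ => by
    simp only [rename, subst, rename_subst M]
    congr 2
    funext τ v
    cases v with
    | zero => rfl
    | succ w => exact (rename_rename _ _ _).trans (rename_rename (s τ w) ρ _).symm
  | _, _, _, _, .app M N, s, ρ => by
    simp only [rename, subst, rename_subst M, rename_subst N]

theorem subst_subst : ∀ {Γ Δ Θ : List Ty} {σ : Ty} (M : Tm Γ σ) (s₁ : Subst Γ Δ) (s₂ : Subst Δ Θ),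
    subst s₂ (subst s₁ M) = subst (fun τ v => subst s₂ (s₁ τ v)) M
  | _, _, _, _, .var _, _, _ => rfl
  | _, _, _, _, .lam M, s₁, s₂ => by
    simp only [subst, subst_subst M]
    congr 2
    funext τ v
    cases v with
    | zero => rfl
    | succ w => exact (subst_rename _ _ _).trans (rename_subst _ _ _).symm
  | _, _, _, _, .app M N, s₁, s₂ => by
    simp only [subst, subst_subst M, subst_subst N]

theorem subst_var : ∀ {Γ : List Ty} {σ : Ty} (M : Tm Γ σ), subst (fun _ v => .var v) M = M
  | _, _, .var _ => rfl
  | Γ, _, @Tm.lam _ σ _ M => by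
    have lift_var : Subst.lift (Γ := Γ) (fun _ v => .var v) σ = fun _ v => .var v := by
      funext τ v
      cases v <;> rfl
    simp only [subst, lift_var, subst_var M]
  | _, _, .app M N => by
    simp only [subst, subst_var M, subst_var N]

def Subst.extend {Γ Δ : List Ty} {σ : Ty} (N : Tm Δ σ) (s : Subst Γ Δ) : Subst (σ :: Γ) Δ :=
  fun _ v =>
    match v with
    | .zero => N
    | .succ w => s _ w

theorem subst1_subst_lift {Γ Δ : List Ty} {σ τ : Ty} (M : Tm (σ :: Γ) τ) (s : Subst Γ Δ)
    (N : Tm Δ σ) : subst1 (subst (Subst.lift s σ) M) N = subst (Subst.extend N s) M := by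
  rw [subst1, subst_subst]
  congr 1
  funext τ v
  cases v with
  | zero => rfl
  | succ w => exact (subst_rename _ _ _).trans (subst_var _)

def Ty.interp (A : Type) : Ty → Type
  | .o => A
  | .arrow σ τ => Ty.interp A σ → Ty.interp A τ

def Env (A : Type) (Γ : List Ty) : Type := ∀ σ, Var Γ σ → Ty.interp A σ

def Env.cons {A : Type} {Γ : List Ty} {σ : Ty} (a : Ty.interp A σ) (η : Env A Γ) :
    Env A (σ :: Γ) :=
  fun _ v =>
    match v with
    | .zero => a
    | .succ w => η _ w

def Env.nil (A : Type) : Env A [] := fun _ v => nomatch v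

def Tm.eval {A : Type} : {Γ : List Ty} → {σ : Ty} → Tm Γ σ → Env A Γ → Ty.interp A σ
  | _, _, .var v, η => η _ v
  | _, _, .lam M, η => fun a => M.eval (Env.cons a η)
  | _, _, .app M N, η => M.eval η (N.eval η)

namespace Tm

variable {A : Type}

theorem eval_rename : ∀ {Γ Δ : List Ty} {σ : Ty} (M : Tm Γ σ) (ρ : Ren Γ Δ) (η : Env A Δ),
    (rename ρ M).eval η = M.eval (fun τ v => η τ (ρ τ v))
  | _, _, _, .var _, _, _ => rfl
  | _, _, _, .lam M, ρ, η => by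
    funext a
    simp only [rename, eval, eval_rename M]
    congr 1
    funext τ v
    cases v <;> rfl
  | _, _, _, .app M N, ρ, η => by
    simp only [rename, eval, eval_rename M, eval_rename N]

theorem eval_subst : ∀ {Γ Δ : List Ty} {σ : Ty} (M : Tm Γ σ) (s : Subst Γ Δ) (η : Env A Δ),
    (subst s M).eval η = M.eval (fun τ v => (s τ v).eval η)
  | _, _, _, .var _, _, _ => rfl
  | _, _, _, .lam M, s, η => by
    funext a
    simp only [subst, eval, eval_subst M]
    congr 1
    funext τ v
    cases v with
    | zero => rfl
    | succ w => exact eval_rename _ _ _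
  | _, _, _, .app M N, s, η => by
    simp only [subst, eval, eval_subst M, eval_subst N]

end Tm

theorem BetaEta.eval_eq {A : Type} {Γ : List Ty} {σ : Ty} {M N : Tm Γ σ} (h : BetaEta M N)
    (η : Env A Γ) : M.eval η = N.eval η := by
  induction h with
  | refl => rfl
  | symm _ ih => exact (ih η).symm
  | trans _ _ ih₁ ih₂ => exact (ih₁ η).trans (ih₂ η)
  | app_congr _ _ ihM ihN => simp only [Tm.eval, ihM η, ihN η]
  | lam_congr _ ih => funext a; exact ih _
  | beta M N =>
    show M.eval (Env.cons (N.eval η) η) = _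
    rw [subst1, Tm.eval_subst]
    congr 1
    funext τ v
    cases v <;> rfl
  | eta M =>
    funext a
    show M.eval η a = (rename _ M).eval (Env.cons a η) a
    exact (congrFun (Tm.eval_rename M (fun _ v => .succ v) (Env.cons a η)) a).symm

def Canonical {Δ : List Ty} : (σ : Ty) → Tm Δ σ → Prop
  | .o, M => ∃ v : Var Δ .o, BetaEta M (.var v)
  | .arrow σ τ, M => ∀ N, Canonical σ N → Canonical τ (M.app N)

theorem Canonical.of_betaEta {Δ : List Ty} :
    ∀ (σ : Ty) {M M' : Tm Δ σ}, BetaEta M M' → Canonical σ M → Canonical σ M'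
  | .o, _, _, h, ⟨v, hv⟩ => ⟨v, h.symm.trans hv⟩
  | .arrow _ τ, _, _, h, hM => fun N hN =>
    Canonical.of_betaEta τ (.app_congr h (.refl N)) (hM N hN)

theorem canonical_subst : ∀ {Γ Δ : List Ty} {σ : Ty} (M : Tm Γ σ) (s : Subst Γ Δ),
    (∀ τ v, Canonical τ (s τ v)) → Canonical σ (subst s M)
  | _, _, _, .var v, _, hs => hs _ v
  | _, _, _, .app M N, s, hs => canonical_subst M s hs _ (canonical_subst N s hs)
  | _, _, _, @Tm.lam _ σ τ M, s, hs => fun N hN => by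
    have extend_canonical : Canonical τ (subst (Subst.extend N s) M) := by
      refine canonical_subst M _ fun τ v => ?_
      cases v with
      | zero => exact hN
      | succ w => exact hs _ w
    have hβ := BetaEta.beta (subst (Subst.lift s σ) M) N
    rw [subst1_subst_lift] at hβ
    exact Canonical.of_betaEta τ hβ.symm extend_canonical

theorem betaEta_churchTrue_or_churchFalse (M : Tm [] TyB) :
    BetaEta M churchTrue ∨ BetaEta M churchFalse := by
  -- η-expand down to base type, where the identity substitution is canonical.
  let body : Tm [Ty.o, Ty.o] Ty.o :=
    .app (.app (rename (fun _ v => .succ v) (rename (fun _ v => .succ v) M)) (.var (.succ .zero)))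
      (.var .zero)
  have eta_expand : BetaEta M (.lam (.lam body)) :=
    (BetaEta.eta M).trans (.lam_congr (.eta _))
  have body_canonical : Canonical Ty.o body := by
    rw [← subst_var body]
    refine canonical_subst body _ fun τ v => ?_
    rcases v with _ | _ | ⟨⟨⟩⟩ <;> exact ⟨_, .refl _⟩
  obtain ⟨v, hv⟩ := body_canonical
  have hM : BetaEta M (.lam (.lam (.var v))) := eta_expand.trans (.lam_congr (.lam_congr hv))
  rcases v with _ | _ | ⟨⟨⟩⟩
  · exact .inr hM
  · exact .inl hM

namespace DFA

variable {σ : Type} [Fintype σ] (A : DFA Bool σ) [DecidablePred (· ∈ A.accept)]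

/-- The flag in the machine state records whether the last pop found a letter. -/
def toFinTM2 : Turing.FinTM2 where
  K := Unit
  k₀ := ()
  k₁ := ()
  Γ := fun _ => Bool
  Λ := Unit
  main := ()
  σ := σ × Bool
  initialState := (A.start, false)
  m _ :=
    .pop () (fun p a => (a.elim p.1 (A.step p.1), a.isSome)) <|
      .branch (fun p => p.2) (.goto fun _ => ())
        (.push () (fun p => decide (p.1 ∈ A.accept)) (.load (fun _ => (A.start, false)) .halt))

theorem toFinTM2_iterate_step (s : List Bool) (q : σ) (b : Bool) :
    (flip bind A.toFinTM2.step)^[s.length + 1] (some ⟨some (), (q, b), fun _ => s⟩) =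
      some ⟨none, (A.start, false), fun _ => [decide (A.evalFrom q s ∈ A.accept)]⟩ := by
  induction s generalizing q b with
  | nil => rfl
  | cons a s ih => exact ih (A.step q a) true

theorem initList_toFinTM2 (s : List Bool) :
    Turing.initList A.toFinTM2 (s.map (Equiv.refl Bool).invFun) =
      ⟨some (), (A.start, false), fun _ => s⟩ :=
  congrArg (Turing.initList A.toFinTM2) (List.map_id s)

theorem haltList_toFinTM2 (s : List Bool) :
    Turing.haltList A.toFinTM2 (s.map (Equiv.refl Bool).invFun) =
      ⟨none, (A.start, false), fun _ => s⟩ :=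
  congrArg (Turing.haltList A.toFinTM2) (List.map_id s)

def tm2ComputableInTime :
    Turing.TM2ComputableInTime finEncodingListBool.encode Computability.encodingBoolBool.encode
      fun s => decide (A.eval s ∈ A.accept) where
  tm := A.toFinTM2
  inputAlphabet := .refl Bool
  outputAlphabet := .refl Bool
  time n := n + 1
  outputsFun s := by
    refine ⟨⟨s.length + 1, ?_⟩, le_rfl⟩
    rw [Option.map_some, initList_toFinTM2, haltList_toFinTM2]
    exact A.toFinTM2_iterate_step s A.start false

end DFA

theorem Tm.eval_eq_true_iff_betaEta_churchTrue (N : Tm [] TyB) :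
    N.eval (Env.nil Bool) true false = true ↔ BetaEta N churchTrue := by
  refine ⟨fun hN => ?_, fun h => congrFun (congrFun (h.eval_eq (Env.nil Bool)) true) false⟩
  refine (betaEta_churchTrue_or_churchFalse N).resolve_right fun h => ?_
  have false_eq_true := congrFun (congrFun (h.eval_eq (Env.nil Bool)) true) false
  exact Bool.false_ne_true (false_eq_true.symm.trans hN)

theorem eval_churchBits {A : Type} (s : List Bool) (f₀ f₁ : A → A) (x : A) :
    (churchBits s).eval (Env.cons x (Env.cons f₁ (Env.cons f₀ (Env.nil A)))) =
      s.foldr (fun b => if b then f₁ else f₀) x := by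
  induction s with
  | nil => rfl
  | cons b s ih => cases b <;> exact congrArg _ ih

/-- Reading a word left to right on denotations of `𝐖`: appending the bit `b` to the word
denoted by `q` inserts `f_b` innermost. -/
def churchDFA (M : Tm [] (Ty.arrow TyW TyB)) :
    DFA Bool ((Bool → Bool) → (Bool → Bool) → Bool → Bool) where
  step q b f₀ f₁ x := q f₀ f₁ ((if b then f₁ else f₀) x)
  start _ _ x := x
  accept := {q | M.eval (Env.nil Bool) q true false = true}

instance (M : Tm [] (Ty.arrow TyW TyB)) : DecidablePred (· ∈ (churchDFA M).accept) :=
  fun _ => instDecidableEqBool _ _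

theorem churchDFA_evalFrom (M : Tm [] (Ty.arrow TyW TyB)) (s : List Bool)
    (q : (Bool → Bool) → (Bool → Bool) → Bool → Bool) (f₀ f₁ : Bool → Bool) (x : Bool) :
    (churchDFA M).evalFrom q s f₀ f₁ x = q f₀ f₁ (s.foldr (fun b => if b then f₁ else f₀) x) := by
  induction s generalizing q with
  | nil => rfl
  | cons b s ih => exact ih _

theorem churchDFA_eval (M : Tm [] (Ty.arrow TyW TyB)) (s : List Bool) :
    (churchDFA M).eval s = (churchStr s).eval (Env.nil Bool) := by
  funext f₀ f₁ x
  exact (churchDFA_evalFrom M s _ f₀ f₁ x).trans (eval_churchBits s f₀ f₁ x).symm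

theorem mem_churchDFA_accept_iff (M : Tm [] (Ty.arrow TyW TyB)) (s : List Bool) :
    (churchDFA M).eval s ∈ (churchDFA M).accept ↔
      (M.app (churchStr s)).eval (Env.nil Bool) true false = true := by
  simp only [churchDFA_eval]
  rfl

/-- **Terui.** Every language `𝓛 ⊆ {0,1}*` decided by a closed
simply-typed λ-term `M : 𝐖 → 𝐁` (in the sense that `s ∈ 𝓛` iff
`M s̄ =βη 𝐭𝐫𝐮𝐞`) belongs to `𝐋𝐢𝐧𝐓𝐈𝐌𝐄`: its characteristic function is
computable by a deterministic Turing machine in time linear in the length of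
the input. -/
theorem terui_linear_time (M : Tm [] (Ty.arrow TyW TyB)) :
    ∃ χ : List Bool → Bool,
      (∀ s : List Bool, χ s = true ↔ BetaEta (M.app (churchStr s)) churchTrue) ∧
      ∃ (H : Turing.TM2ComputableInTime finEncodingListBool.encode
          Computability.encodingBoolBool.encode χ) (c : ℕ),
        ∀ n : ℕ, H.time n ≤ c * n + c := by
  refine ⟨_, fun s => ?_, (churchDFA M).tm2ComputableInTime, 1, fun n => by
    simp [DFA.tm2ComputableInTime]⟩
  rw [decide_eq_true_iff, mem_churchDFA_accept_iff, Tm.eval_eq_true_iff_betaEta_churchTrue]
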